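/- Let d ≥ 2 be a natural number and 1 < α < 2 a real number. Then the left-hand side of the Lyapunov-exponent equation tends to ν⋆ as γ decreases to α: the function γ ↦ (2^α/(γ−α)) Γ(γ/2) Γ(d/2 − (γ−α)/2) / (Γ(d/2 − γ/2) Γ((γ−α)/2)) tends to ν⋆ := 2^{α−1} Γ(α/2) Γ(d/2) / Γ((d−α)/2) as γ → α from the right (i.e. along γ ∈ (α, d]). -/
import Mathlib


/-- `ν⋆ = 2^{α−1} Γ(α/2) Γ(d/2) / Γ((d−α)/2)`. -/
noncomputable def nuStar (d : ℕ) (α : ℝ) : ℝ :=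
  2 ^ (α - 1) * Real.Gamma (α / 2) * Real.Gamma ((d : ℝ) / 2) /
    Real.Gamma (((d : ℝ) - α) / 2)

private lemma gamma_contAt {s : ℝ} (hs : 0 < s) : ContinuousAt Real.Gamma s :=
  (Real.differentiableAt_Gamma
    (fun m => (lt_of_le_of_lt (neg_nonpos.mpr m.cast_nonneg) hs).ne')).continuousAt

/-- The left-hand side of the Lyapunov-exponent equation tends to `ν⋆` as
`γ ↓ α` along `γ ∈ (α, d]`. -/
theorem stmt_11 (d : ℕ) (hd : 2 ≤ d) (α : ℝ) (hα1 : 1 < α) (hα2 : α < 2) :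
    Filter.Tendsto
      (fun γ : ℝ => 2 ^ α / (γ - α) * Real.Gamma (γ / 2) *
          Real.Gamma ((d : ℝ) / 2 - (γ - α) / 2) /
          (Real.Gamma ((d : ℝ) / 2 - γ / 2) * Real.Gamma ((γ - α) / 2)))
      (nhdsWithin α (Set.Ioc α (d : ℝ))) (nhds (nuStar d α)) := by
  have hd2 : (2 : ℝ) ≤ (d : ℝ) := by exact_mod_cast hd
  -- inner affine maps
  have tA : Filter.Tendsto (fun γ : ℝ => γ / 2) (nhds α) (nhds (α / 2)) :=
    (continuous_id.div_const 2).tendsto α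
  have tB : Filter.Tendsto (fun γ : ℝ => (d : ℝ) / 2 - (γ - α) / 2) (nhds α)
      (nhds ((d : ℝ) / 2)) := by
    have h := Continuous.tendsto
      (f := fun γ : ℝ => (d : ℝ) / 2 - (γ - α) / 2) (by fun_prop) α
    simpa using h
  have tC : Filter.Tendsto (fun γ : ℝ => (d : ℝ) / 2 - γ / 2) (nhds α)
      (nhds ((d : ℝ) / 2 - α / 2)) := Continuous.tendsto (by fun_prop) α
  have tD : Filter.Tendsto (fun γ : ℝ => (γ - α) / 2 + 1) (nhds α) (nhds 1) := by
    have h := Continuous.tendsto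
      (f := fun γ : ℝ => (γ - α) / 2 + 1) (by fun_prop) α
    simpa using h
  have hGA := ((gamma_contAt (by linarith : (0:ℝ) < α / 2)).tendsto).comp tA
  have hGB := ((gamma_contAt (by linarith : (0:ℝ) < (d : ℝ) / 2)).tendsto).comp tB
  have hGC := ((gamma_contAt (by linarith : (0:ℝ) < (d : ℝ) / 2 - α / 2)).tendsto).comp tC
  have hGD := ((gamma_contAt (by norm_num : (0:ℝ) < 1)).tendsto).comp tD
  have hC0 : 0 < Real.Gamma ((d : ℝ) / 2 - α / 2) :=
    Real.Gamma_pos_of_pos (by linarith)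
  have hne : Real.Gamma ((d : ℝ) / 2 - α / 2) * (2 * Real.Gamma 1) ≠ 0 := by
    rw [Real.Gamma_one]; positivity
  have htg : Filter.Tendsto
      (fun γ : ℝ => 2 ^ α * Real.Gamma (γ / 2) *
        Real.Gamma ((d : ℝ) / 2 - (γ - α) / 2) /
        (Real.Gamma ((d : ℝ) / 2 - γ / 2) * (2 * Real.Gamma ((γ - α) / 2 + 1))))
      (nhds α)
      (nhds (2 ^ α * Real.Gamma (α / 2) * Real.Gamma ((d : ℝ) / 2) /
        (Real.Gamma ((d : ℝ) / 2 - α / 2) * (2 * Real.Gamma 1)))) :=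
    ((tendsto_const_nhds.mul hGA).mul hGB).div (hGC.mul (tendsto_const_nhds.mul hGD)) hne
  have hval : 2 ^ α * Real.Gamma (α / 2) * Real.Gamma ((d : ℝ) / 2) /
      (Real.Gamma ((d : ℝ) / 2 - α / 2) * (2 * Real.Gamma 1)) = nuStar d α := by
    have h2 : (2:ℝ) ^ (α - 1) = 2 ^ α / 2 := by
      rw [Real.rpow_sub (by norm_num), Real.rpow_one]
    have hde : ((d:ℝ) - α) / 2 = (d:ℝ)/2 - α/2 := by ring
    rw [Real.Gamma_one, nuStar, h2, hde]
    ring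
  rw [hval] at htg
  refine (htg.mono_left nhdsWithin_le_nhds).congr' ?_
  filter_upwards [self_mem_nhdsWithin] with γ hγ
  have hx : (0:ℝ) < (γ - α) / 2 := by have := hγ.1; linarith
  by_cases hC : Real.Gamma ((d : ℝ) / 2 - γ / 2) = 0
  · simp [hC]
  · have h1 : γ - α ≠ 0 := sub_ne_zero.mpr (ne_of_gt hγ.1)
    have h2 : Real.Gamma ((γ - α) / 2) ≠ 0 := (Real.Gamma_pos_of_pos hx).ne'
    rw [Real.Gamma_add_one hx.ne']
    field_simp
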